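/- Let c_{i,j}(n) denote the number of square-lattice walks of length n from (−1,0) to (i,j) confined to the three-quadrant cone C, and let g_{k,ℓ}(n) denote the number of square-lattice walks of length n from (0,0) to (k,ℓ) confined to the Gessel cone G = {(k,ℓ) ∈ ℤ² : k + ℓ ≥ 0 and ℓ ≥ 0}. Then for all integers i, j with j ≥ 0 and i < j, and all n ≥ 0: c_{i,j}(n) − c_{j,i}(n) = g_{−i−1,j}(n). -/

import Mathlib

/-- Square-lattice steps. -/
def squareSteps : Set (ℤ × ℤ) := {(1,0), (-1,0), (0,1), (0,-1)}

/-- Diagonal-lattice steps. -/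
def diagSteps : Set (ℤ × ℤ) := {(1,1), (1,-1), (-1,1), (-1,-1)}

/-- The three-quadrant cone `C = {(i,j) : i ≥ 0 or j ≥ 0}`. -/
def coneC : Set (ℤ × ℤ) := {p | 0 ≤ p.1 ∨ 0 ≤ p.2}

/-- The quadrant `Q = {(i,j) : i ≥ 0 and j ≥ 0}`. -/
def quadQ : Set (ℤ × ℤ) := {p | 0 ≤ p.1 ∧ 0 ≤ p.2}

/-- Number of walks of length `n` with steps in `steps`, from `a` to `b`,
confined to `region`. -/
noncomputable def walkCount (steps region : Set (ℤ × ℤ)) (a b : ℤ × ℤ) (n : ℕ) : ℕ :=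
  Nat.card {w : Fin (n+1) → ℤ × ℤ //
    w 0 = a ∧ w (Fin.last n) = b ∧
    (∀ k : Fin n, w k.succ - w k.castSucc ∈ steps) ∧
    (∀ k, w k ∈ region)}

/-- The Gessel cone `G = {(i,j) : i + j ≥ 0 and j ≥ 0}`. -/
def coneG : Set (ℤ × ℤ) := {p | 0 ≤ p.1 + p.2 ∧ 0 ≤ p.2}
/-!
Split the walks in `C` from `(-1,0)` to `(i,j)` by whether they touch the diagonal `x = y`.
Reflecting in the diagonal the part of a walk after its last diagonal point is an involution
that matches the touching walks ending at `(i,j)` with those ending at `(j,i)`; and every walk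
ending at `(j,i)` touches the diagonal, because `x - y` rises by at most one per step, from `-1`
to `j - i > 0`. A walk that never touches the diagonal stays in `C ∩ {x < y}`, and the affine
reflection `(x,y) ↦ (-x-1,y)` maps that region onto `G` and `(-1,0)` to `(0,0)`.
-/

open Set
open scoped Pointwise

def walkSet (steps region : Set (ℤ × ℤ)) (a b : ℤ × ℤ) (n : ℕ) :
    Set (Fin (n + 1) → ℤ × ℤ) :=
  {w | w 0 = a ∧ w (Fin.last n) = b ∧
    (∀ k : Fin n, w k.succ - w k.castSucc ∈ steps) ∧ ∀ k, w k ∈ region}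

def touchesDiagonal (n : ℕ) : Set (Fin (n + 1) → ℤ × ℤ) := {w | ∃ k, (w k).1 = (w k).2}

def reflectAfterLastDiagonal {n : ℕ} (w : Fin (n + 1) → ℤ × ℤ) : Fin (n + 1) → ℤ × ℤ :=
  fun m => if ∀ k, m ≤ k → (w k).1 ≠ (w k).2 then (w m).swap else w m

lemma Fin.forall_lt_zero_of_succ_le_add_one {n : ℕ} {f : Fin (n + 1) → ℤ}
    (hstep : ∀ k : Fin n, f k.succ ≤ f k.castSucc + 1) (h0 : f 0 < 0) (hne : ∀ k, f k ≠ 0)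
    (k : Fin (n + 1)) : f k < 0 := by
  induction k using Fin.induction with
  | zero => exact h0
  | succ k ih => have := hstep k; have := hne k.succ; omega

lemma Set.Finite.singleton_add_nsmul {α : Type*} [AddMonoid α] {S : Set α} (hS : S.Finite)
    (a : α) (k : ℕ) :
    ({a} + k • S).Finite := by
  induction k with
  | zero => simp
  | succ k ih => rw [succ_nsmul, ← add_assoc]; exact ih.add hS

section walks

variable {steps region : Set (ℤ × ℤ)} {a b : ℤ × ℤ} {n : ℕ}

lemma walkCount_eq_ncard : walkCount steps region a b n = (walkSet steps region a b n).ncard :=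
  Nat.card_coe_set_eq _

lemma walkCount_congr_equiv {steps' region' : Set (ℤ × ℤ)} (e : ℤ × ℤ ≃ ℤ × ℤ)
    (hsteps : ∀ p q, e p - e q ∈ steps' ↔ p - q ∈ steps)
    (hregion : ∀ p, e p ∈ region' ↔ p ∈ region) :
    walkCount steps' region' (e a) (e b) n = walkCount steps region a b n :=
  (Nat.card_congr (((Equiv.refl _).arrowCongr e).subtypeEquiv fun w => by
    simp [hsteps, hregion])).symm

lemma mem_singleton_add_nsmul_of_mem_walkSet {w : Fin (n + 1) → ℤ × ℤ}
    (hw : w ∈ walkSet steps region a b n) (k : Fin (n + 1)) : w k ∈ {a} + (k : ℕ) • steps := by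
  induction k using Fin.induction with
  | zero => simp [hw.1]
  | succ k ih =>
    rw [Fin.val_succ, succ_nsmul, ← add_assoc]
    simpa using add_mem_add ih (hw.2.2.1 k)

lemma walkSet_finite (hsteps : steps.Finite) : (walkSet steps region a b n).Finite :=
  (Set.Finite.pi fun k : Fin (n + 1) => hsteps.singleton_add_nsmul a k).subset
    fun _ hw k _ => mem_singleton_add_nsmul_of_mem_walkSet hw k

lemma lt_of_mem_walkSet_of_not_mem_touchesDiagonal (hsteps : ∀ s ∈ steps, s.1 - s.2 ≤ 1)
    (ha : a.1 < a.2) {w : Fin (n + 1) → ℤ × ℤ} (hw : w ∈ walkSet steps region a b n)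
    (hT : w ∉ touchesDiagonal n) (k : Fin (n + 1)) : (w k).1 < (w k).2 := by
  have hlt := Fin.forall_lt_zero_of_succ_le_add_one (f := fun k => (w k).1 - (w k).2)
    (fun k => by
      have := hsteps _ (hw.2.2.1 k)
      simp only [Prod.fst_sub, Prod.snd_sub] at this
      linarith)
    (by simpa [hw.1] using ha) (fun k hk => hT ⟨k, sub_eq_zero.1 hk⟩) k
  simpa using hlt

lemma walkSet_subset_touchesDiagonal (hsteps : ∀ s ∈ steps, s.1 - s.2 ≤ 1) (ha : a.1 < a.2)
    (hb : b.2 < b.1) : walkSet steps region a b n ⊆ touchesDiagonal n := fun w hw => by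
  by_contra hT
  have := lt_of_mem_walkSet_of_not_mem_touchesDiagonal hsteps ha hw hT (Fin.last n)
  rw [hw.2.1] at this
  exact lt_asymm hb this

lemma walkSet_diff_touchesDiagonal (hsteps : ∀ s ∈ steps, s.1 - s.2 ≤ 1) (ha : a.1 < a.2) :
    walkSet steps region a b n \ touchesDiagonal n =
      walkSet steps (region ∩ {p | p.1 < p.2}) a b n := by
  ext w
  constructor
  · rintro ⟨hw, hT⟩
    exact ⟨hw.1, hw.2.1, hw.2.2.1, fun k =>
      ⟨hw.2.2.2 k, lt_of_mem_walkSet_of_not_mem_touchesDiagonal hsteps ha hw hT k⟩⟩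
  · rintro ⟨h0, hl, hs, hr⟩
    exact ⟨⟨h0, hl, hs, fun k => (hr k).1⟩, fun ⟨k, hk⟩ => (hr k).2.ne hk⟩

lemma reflectAfterLastDiagonal_apply_eq_or (w : Fin (n + 1) → ℤ × ℤ) (m : Fin (n + 1)) :
    reflectAfterLastDiagonal w m = w m ∨ reflectAfterLastDiagonal w m = (w m).swap := by
  unfold reflectAfterLastDiagonal
  split_ifs <;> simp

lemma reflectAfterLastDiagonal_apply_fst_eq_snd_iff (w : Fin (n + 1) → ℤ × ℤ)
    (m : Fin (n + 1)) :
    (reflectAfterLastDiagonal w m).1 = (reflectAfterLastDiagonal w m).2 ↔ (w m).1 = (w m).2 := by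
  rcases reflectAfterLastDiagonal_apply_eq_or w m with h | h <;> rw [h]
  exact eq_comm

lemma reflectAfterLastDiagonal_involutive :
    Function.Involutive (reflectAfterLastDiagonal (n := n)) := by
  intro w
  funext m
  have hcond : (∀ k, m ≤ k →
      (reflectAfterLastDiagonal w k).1 ≠ (reflectAfterLastDiagonal w k).2) ↔
      ∀ k, m ≤ k → (w k).1 ≠ (w k).2 := by
    simp only [ne_eq, reflectAfterLastDiagonal_apply_fst_eq_snd_iff]
  by_cases h : ∀ k, m ≤ k → (w k).1 ≠ (w k).2
  · rw [reflectAfterLastDiagonal, if_pos (hcond.2 h), reflectAfterLastDiagonal, if_pos h,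
      Prod.swap_swap]
  · rw [reflectAfterLastDiagonal, if_neg (mt hcond.1 h), reflectAfterLastDiagonal, if_neg h]

lemma reflectAfterLastDiagonal_sub_mem (hsteps : ∀ s ∈ steps, s.swap ∈ steps)
    {w : Fin (n + 1) → ℤ × ℤ} (hs : ∀ k : Fin n, w k.succ - w k.castSucc ∈ steps) (k : Fin n) :
    reflectAfterLastDiagonal w k.succ - reflectAfterLastDiagonal w k.castSucc ∈ steps := by
  by_cases hsucc : ∀ k', k.succ ≤ k' → (w k').1 ≠ (w k').2
  · by_cases hcast : ∀ k', k.castSucc ≤ k' → (w k').1 ≠ (w k').2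
    · rw [reflectAfterLastDiagonal, if_pos hsucc, reflectAfterLastDiagonal, if_pos hcast,
        ← Prod.swap_sub]
      exact hsteps _ (hs k)
    · -- the walk leaves the diagonal for the last time at step `k`
      have hdiag : (w k.castSucc).swap = w k.castSucc := by
        push Not at hcast
        obtain ⟨k', hle, hk'⟩ := hcast
        obtain rfl : k' = k.castSucc := by
          by_contra hne
          exact hsucc k' (Fin.castSucc_lt_iff_succ_le.1 (hle.lt_of_ne (Ne.symm hne))) hk'
        ext <;> simp [hk']
      rw [reflectAfterLastDiagonal, if_pos hsucc, reflectAfterLastDiagonal, if_neg hcast,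
        ← hdiag, ← Prod.swap_sub]
      exact hsteps _ (hs k)
  · have hcast : ¬ ∀ k', k.castSucc ≤ k' → (w k').1 ≠ (w k').2 :=
      fun h => hsucc fun k' hle => h k' (Fin.castSucc_lt_succ.le.trans hle)
    rw [reflectAfterLastDiagonal, if_neg hsucc, reflectAfterLastDiagonal, if_neg hcast]
    exact hs k

lemma reflectAfterLastDiagonal_mem (hsteps : ∀ s ∈ steps, s.swap ∈ steps)
    (hregion : ∀ p ∈ region, p.swap ∈ region) (hb : b.1 ≠ b.2) {w : Fin (n + 1) → ℤ × ℤ}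
    (hw : w ∈ walkSet steps region a b n ∩ touchesDiagonal n) :
    reflectAfterLastDiagonal w ∈ walkSet steps region a b.swap n ∩ touchesDiagonal n := by
  obtain ⟨⟨h0, hl, hs, hr⟩, kt, hkt⟩ := hw
  refine ⟨⟨?_, ?_, reflectAfterLastDiagonal_sub_mem hsteps hs, fun m => ?_⟩, kt, ?_⟩
  · rw [reflectAfterLastDiagonal, if_neg fun h => h kt (Fin.zero_le kt) hkt, h0]
  · have hlast : ∀ k, Fin.last n ≤ k → (w k).1 ≠ (w k).2 := by
      intro k hk
      rw [Fin.last_le_iff.1 hk, hl]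
      exact hb
    rw [reflectAfterLastDiagonal, if_pos hlast, hl]
  · rcases reflectAfterLastDiagonal_apply_eq_or w m with h | h <;> rw [h]
    exacts [hr m, hregion _ (hr m)]
  · exact (reflectAfterLastDiagonal_apply_fst_eq_snd_iff w kt).2 hkt

lemma ncard_walkSet_swap_inter_touchesDiagonal (hsteps : ∀ s ∈ steps, s.swap ∈ steps)
    (hregion : ∀ p ∈ region, p.swap ∈ region) (hb : b.1 ≠ b.2) :
    (walkSet steps region a b.swap n ∩ touchesDiagonal n).ncard =
      (walkSet steps region a b n ∩ touchesDiagonal n).ncard :=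
  Set.ncard_congr (fun w _ => reflectAfterLastDiagonal w)
    (fun _ hw => by simpa using reflectAfterLastDiagonal_mem hsteps hregion hb.symm hw)
    (fun _ _ _ _ h => reflectAfterLastDiagonal_involutive.injective h)
    (fun w hw => ⟨reflectAfterLastDiagonal w,
      reflectAfterLastDiagonal_mem hsteps hregion hb hw, reflectAfterLastDiagonal_involutive w⟩)

end walks

lemma squareSteps_finite : squareSteps.Finite := by simp [squareSteps]

lemma swap_mem_squareSteps : ∀ s ∈ squareSteps, s.swap ∈ squareSteps := by
  rintro s (rfl | rfl | rfl | rfl) <;> simp [squareSteps]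

lemma fst_sub_snd_le_one_of_mem_squareSteps : ∀ s ∈ squareSteps, s.1 - s.2 ≤ 1 := by
  rintro s (rfl | rfl | rfl | rfl) <;> norm_num

lemma swap_mem_coneC : ∀ p ∈ coneC, p.swap ∈ coneC := fun _ hp => hp.symm

def gesselReflection : ℤ × ℤ ≃ ℤ × ℤ :=
  Function.Involutive.toPerm (fun p => (-p.1 - 1, p.2)) fun p => by simp

@[simp]
lemma gesselReflection_apply (p : ℤ × ℤ) : gesselReflection p = (-p.1 - 1, p.2) := rfl

lemma gesselReflection_sub_mem_squareSteps_iff (p q : ℤ × ℤ) :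
    gesselReflection p - gesselReflection q ∈ squareSteps ↔ p - q ∈ squareSteps := by
  simp only [squareSteps, gesselReflection_apply, Prod.mk_sub_mk, sub_sub_sub_cancel_right,
    mem_insert_iff, mem_singleton_iff, Prod.ext_iff, Prod.fst_sub, Prod.snd_sub]
  omega

lemma gesselReflection_mem_coneG_iff (p : ℤ × ℤ) :
    gesselReflection p ∈ coneG ↔ p ∈ coneC ∩ {p | p.1 < p.2} := by
  simp only [coneG, coneC, gesselReflection_apply, mem_inter_iff, mem_ofPred_eq]
  omega

theorem square_reflection_to_gessel_general (i j : ℤ) (hij : i < j) (n : ℕ) :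
    (walkCount squareSteps coneC (-1, 0) (i, j) n : ℤ) -
        (walkCount squareSteps coneC (-1, 0) (j, i) n : ℤ) =
      (walkCount squareSteps coneG (0, 0) (-i - 1, j) n : ℤ) := by
  set W := walkSet squareSteps coneC (-1, 0) (i, j) n
  have htouch :
      (W ∩ touchesDiagonal n).ncard = walkCount squareSteps coneC (-1, 0) (j, i) n := by
    rw [walkCount_eq_ncard, ← inter_eq_left.2 (walkSet_subset_touchesDiagonal
      fst_sub_snd_le_one_of_mem_squareSteps (by norm_num) hij)]
    exact (ncard_walkSet_swap_inter_touchesDiagonal swap_mem_squareSteps swap_mem_coneC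
      hij.ne).symm
  have hgessel : (W \ touchesDiagonal n).ncard =
      walkCount squareSteps coneG (0, 0) (-i - 1, j) n := by
    rw [walkSet_diff_touchesDiagonal fst_sub_snd_le_one_of_mem_squareSteps (by norm_num),
      ← walkCount_eq_ncard, ← walkCount_congr_equiv gesselReflection
        gesselReflection_sub_mem_squareSteps_iff gesselReflection_mem_coneG_iff]
    simp
  rw [walkCount_eq_ncard, ← ncard_inter_add_ncard_sdiff_eq_ncard W (touchesDiagonal n)
    (walkSet_finite squareSteps_finite), htouch, hgessel]
  push_cast
  ring

theorem square_reflection_to_gessel (i j : ℤ) (hj : 0 ≤ j) (hij : i < j) (n : ℕ) :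
    (walkCount squareSteps coneC (-1, 0) (i, j) n : ℤ) -
        (walkCount squareSteps coneC (-1, 0) (j, i) n : ℤ) =
      (walkCount squareSteps coneG (0, 0) (-i - 1, j) n : ℤ) :=
  square_reflection_to_gessel_general i j hij n
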